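/- Let T be a finite rooted tree whose nodes are labelled by elements of a type of goals. If some node of T has the same label as one of its proper ancestors, then there exists a finite rooted tree T' with the same root label such that no node of T' has the same label as any of its proper ancestors, and every node label occurring in T' occurs in T. -/

import Mathlib

inductive LTree (α : Type*) : Type _
  | node : α → List (LTree α) → LTree α

def LTree.rootLabel {α : Type*} : LTree α → α
  | .node a _ => a

/-- `a` is a label occurring somewhere in the tree. -/
inductive LTree.HasLabel {α : Type*} (a : α) : LTree α → Prop
  | here (cs : List (LTree α)) : LTree.HasLabel a (.node a cs)
  | child (b : α) (cs : List (LTree α)) (t : LTree α) :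
      t ∈ cs → LTree.HasLabel a t → LTree.HasLabel a (.node b cs)

/-- The tree, placed below the ancestor-label list `anc`, has no node whose label
repeats one of its proper ancestors' labels. -/
inductive LTree.GoodFrom {α : Type*} : List α → LTree α → Prop
  | node (anc : List α) (a : α) (cs : List (LTree α)) :
      a ∉ anc → (∀ t ∈ cs, LTree.GoodFrom (a :: anc) t) → LTree.GoodFrom anc (.node a cs)

/-
Loop elimination. If the root label `a` recurs somewhere below the root, replace the tree by
the subtree rooted at that deeper occurrence, which is strictly smaller and has the same root
label; otherwise recurse into the children. The recursion terminates because the size of the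
tree strictly decreases, and it never introduces new labels. A tree that is loop-free below `[]`
stays loop-free below any ancestor list avoiding its labels, which is what lets the children's
results be reassembled under the root.
-/

namespace LTree

variable {α : Type*}

theorem hasLabel_node_iff {a b : α} {cs : List (LTree α)} :
    (node a cs).HasLabel b ↔ b = a ∨ ∃ t ∈ cs, t.HasLabel b := by
  constructor
  · rintro (_ | ⟨_, _, t, ht, hb⟩)
    · exact .inl rfl
    · exact .inr ⟨t, ht, hb⟩
  · rintro (rfl | ⟨t, ht, hb⟩)
    · exact .here cs
    · exact .child a cs t ht hb

theorem sizeOf_lt_sizeOf_node {a : α} {cs : List (LTree α)} {t : LTree α} (ht : t ∈ cs) :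
    sizeOf t < sizeOf (node a cs) := by
  have := List.sizeOf_lt_of_mem ht
  simp only [node.sizeOf_spec]
  omega

theorem HasLabel.exists_subtree {a : α} {t : LTree α} (h : t.HasLabel a) :
    ∃ s : LTree α, s.rootLabel = a ∧ sizeOf s ≤ sizeOf t ∧
      ∀ b, s.HasLabel b → t.HasLabel b := by
  induction h with
  | here cs => exact ⟨node a cs, rfl, le_rfl, fun _ => id⟩
  | child b cs t ht _ ih =>
    obtain ⟨s, hroot, hsize, hlabels⟩ := ih
    exact ⟨s, hroot, hsize.trans (sizeOf_lt_sizeOf_node ht).le,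
      fun c hc => .child b cs t ht (hlabels c hc)⟩

theorem GoodFrom.append {l anc : List α} {t : LTree α} (h : t.GoodFrom l)
    (hanc : ∀ b ∈ anc, ¬ t.HasLabel b) : t.GoodFrom (l ++ anc) := by
  induction h with
  | node l a cs ha _ ih =>
    refine .node _ a cs ?_ fun t ht => ih t ht fun b hb hbt => hanc b hb (.child a cs t ht hbt)
    rw [List.mem_append, not_or]
    exact ⟨ha, fun hmem => hanc a hmem (.here cs)⟩

theorem goodFrom_nil_node {a : α} {cs : List (LTree α)}
    (hgood : ∀ t ∈ cs, t.GoodFrom []) (ha : ∀ t ∈ cs, ¬ t.HasLabel a) :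
    (node a cs).GoodFrom [] :=
  .node [] a cs List.not_mem_nil fun t ht =>
    (hgood t ht).append (l := []) (anc := [a]) (by simpa using ha t ht)

theorem exists_goodFrom_nil (T : LTree α) :
    ∃ T' : LTree α, T'.rootLabel = T.rootLabel ∧ T'.GoodFrom [] ∧
      ∀ b, T'.HasLabel b → T.HasLabel b := by
  obtain ⟨a, cs⟩ := T
  by_cases hloop : ∃ t ∈ cs, t.HasLabel a
  · obtain ⟨t, ht, hta⟩ := hloop
    obtain ⟨s, hroot, hsize, hlabels⟩ := hta.exists_subtree
    have : sizeOf s < sizeOf (node a cs) := hsize.trans_lt (sizeOf_lt_sizeOf_node ht)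
    obtain ⟨T', hroot', hgood, hlabels'⟩ := exists_goodFrom_nil s
    exact ⟨T', hroot'.trans hroot, hgood,
      fun b hb => .child a cs t ht (hlabels b (hlabels' b hb))⟩
  · push Not at hloop
    have hchildren : ∀ t ∈ cs, ∃ t' : LTree α, t'.GoodFrom [] ∧
        ∀ b, t'.HasLabel b → t.HasLabel b := by
      intro t ht
      have : sizeOf t < sizeOf (node a cs) := sizeOf_lt_sizeOf_node ht
      obtain ⟨t', -, hgood, hlabels⟩ := exists_goodFrom_nil t
      exact ⟨t', hgood, hlabels⟩
    choose f hgood hlabels using hchildren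
    have mem_map_f {t' : LTree α} (ht' : t' ∈ cs.attach.map fun t => f t.1 t.2) :
        ∃ t, ∃ ht : t ∈ cs, f t ht = t' := by
      simpa using ht'
    refine ⟨node a (cs.attach.map fun t => f t.1 t.2), rfl, ?_, ?_⟩
    · refine goodFrom_nil_node (fun t' ht' => ?_) (fun t' ht' hta => ?_)
      all_goals obtain ⟨t, ht, rfl⟩ := mem_map_f ht'
      · exact hgood t ht
      · exact hloop t ht (hlabels t ht a hta)
    · intro b hb
      rcases hasLabel_node_iff.mp hb with rfl | ⟨t', ht', hbt'⟩
      · exact .here cs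
      · obtain ⟨t, ht, rfl⟩ := mem_map_f ht'
        exact .child a cs t ht (hlabels t ht b hbt')
termination_by sizeOf T
decreasing_by all_goals simpa only [node.sizeOf_spec] using this

end LTree

theorem stmt_13_general {α : Type*} (T : LTree α) :
    ∃ T' : LTree α, T'.rootLabel = T.rootLabel ∧ T'.GoodFrom [] ∧
      ∀ a : α, T'.HasLabel a → T.HasLabel a :=
  T.exists_goodFrom_nil

theorem stmt_13 {α : Type*} (T : LTree α) (h : ¬ T.GoodFrom []) :
    ∃ T' : LTree α, T'.rootLabel = T.rootLabel ∧ T'.GoodFrom [] ∧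
      ∀ a : α, T'.HasLabel a → T.HasLabel a :=
  stmt_13_general T
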